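/- Let Z0 and Z1 be cyclic flats of M⁺, let Z0 ∧ Z1 denote the union of all circuits of M⁺ contained in Z0 ∩ Z1 (the meet of Z0 and Z1 in the lattice of cyclic flats of M⁺), and let L* be the set of coloops of the restriction M|((Z0 − e) ∩ (Z1 − e)). Then ((Z0 − e) ∩ (Z1 − e)) − L* ⊆ (Z0 ∧ Z1) − e, and if (Z0 ∧ Z1) − e is a cyclic set of M then ((Z0 − e) ∩ (Z1 − e)) − L* = (Z0 ∧ Z1) − e. -/

import Mathlib

open Set Matroid
open scoped Classical

namespace Paper

variable {α : Type*}

/-- A circuit of a matroid: a minimal dependent set. -/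
def Circuit (M : Matroid α) (C : Set α) : Prop :=
  M.Dep C ∧ ∀ D ⊂ C, M.Indep D

/-- A coloop: an element of the ground set lying in no circuit. -/
def Coloop (M : Matroid α) (x : α) : Prop :=
  x ∈ M.E ∧ ∀ C, Circuit M C → x ∉ C

/-- The set of coloops of a matroid. -/
def coloops (M : Matroid α) : Set α := {x | Coloop M x}

/-- A cyclic set: a subset of the ground set each of whose elements lies in a
circuit contained in the set (equivalently, the restriction has no coloops). -/
def Cyclic (M : Matroid α) (X : Set α) : Prop :=
  X ⊆ M.E ∧ ∀ x ∈ X, ∃ C, Circuit M C ∧ C ⊆ X ∧ x ∈ C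

/-- A cyclic flat: a cyclic set that is also a flat. -/
def CyclicFlat (M : Matroid α) (X : Set α) : Prop :=
  Cyclic M X ∧ M.IsFlat X

/-- The rank of a set: the largest cardinality of an independent subset. -/
noncomputable def rk (M : Matroid α) (X : Set α) : ℕ :=
  sSup (Set.ncard '' {I | M.Indep I ∧ I ⊆ X})

/-- The nullity of a set: `n(X) = |X| − r(X)`. -/
noncomputable def nullity (M : Matroid α) (X : Set α) : ℤ :=
  (X.ncard : ℤ) - rk M X

/-- Deletion of a single element: `M \ e`. -/
noncomputable def deleteElem (M : Matroid α) (e : α) : Matroid α :=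
  M ↾ (M.E \ {e})

/-!
Away from `e`, the non-coloops of `M|X` are exactly the union of the circuits of `M` inside `X`,
since `M \ e` restricted to `X ⊆ E − e` is just `M|X`. For `X = (Z0 ∩ Z1) − e` that union lies in
`Z0 ∧ Z1` and avoids `e`; conversely, if `(Z0 ∧ Z1) − e` is cyclic in `M \ e`, its circuits are
circuits of `M` inside `X`.
-/

variable {M : Matroid α} {C R X Y : Set α}

/-- The meet `Z0 ∧ Z1` of the paper is `cyclicPart M (Z0 ∩ Z1)`. -/
def cyclicPart (M : Matroid α) (X : Set α) : Set α :=
  ⋃₀ {C | Circuit M C ∧ C ⊆ X}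

lemma circuit_iff_isCircuit : Circuit M C ↔ M.IsCircuit C := by
  refine ⟨fun ⟨hdep, hmin⟩ => isCircuit_iff.2 ⟨hdep, fun D hD hDC => ?_⟩,
    fun hC => ⟨hC.dep, fun D hDC => hC.ssubset_indep hDC⟩⟩
  by_contra hne
  exact hD.not_indep (hmin D (hDC.ssubset_of_ne hne))

lemma circuit_restrict_iff (hR : R ⊆ M.E) : Circuit (M ↾ R) C ↔ Circuit M C ∧ C ⊆ R := by
  simp only [circuit_iff_isCircuit, restrict_isCircuit_iff hR]

lemma cyclicPart_subset : cyclicPart M X ⊆ X :=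
  sUnion_subset fun _ hC => hC.2

lemma cyclicPart_mono (hXY : X ⊆ Y) : cyclicPart M X ⊆ cyclicPart M Y :=
  sUnion_mono fun _ hC => ⟨hC.1, hC.2.trans hXY⟩

lemma cyclicPart_restrict_subset (hR : R ⊆ M.E) : cyclicPart (M ↾ R) X ⊆ cyclicPart M X :=
  sUnion_mono fun _ hC => ⟨((circuit_restrict_iff hR).1 hC.1).1, hC.2⟩

lemma Cyclic.subset_cyclicPart (hX : Cyclic M X) : X ⊆ cyclicPart M X := fun x hx => by
  obtain ⟨C, hC, hCX, hxC⟩ := hX.2 x hx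
  exact ⟨C, ⟨hC, hCX⟩, hxC⟩

lemma sdiff_coloops_restrict (hX : X ⊆ M.E) : X \ coloops (M ↾ X) = cyclicPart M X := by
  ext x
  simp only [cyclicPart, coloops, Coloop, circuit_restrict_iff hX, mem_sdiff, mem_ofPred_eq,
    restrict_ground_eq, mem_sUnion]
  constructor
  · rintro ⟨hxX, hx⟩
    push Not at hx
    obtain ⟨C, hC, hxC⟩ := hx hxX
    exact ⟨C, hC, hxC⟩
  · rintro ⟨C, ⟨hC, hCX⟩, hxC⟩
    exact ⟨hCX hxC, fun ⟨_, h⟩ => h C ⟨hC, hCX⟩ hxC⟩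

lemma deleteElem_restrict_eq {e : α} (hX : X ⊆ M.E \ {e}) : deleteElem M e ↾ X = M ↾ X :=
  restrict_restrict_eq M hX

theorem statement_8_general (M : Matroid α) (e : α)
    (Z0 Z1 : Set α) (h0 : CyclicFlat M Z0)
    (meet : Set α) (hmeet : meet = ⋃₀ {C | Circuit M C ∧ C ⊆ Z0 ∩ Z1})
    (L : Set α)
    (hL : L = coloops (deleteElem M e ↾ ((Z0 \ {e}) ∩ (Z1 \ {e})))) :
    ((Z0 \ {e}) ∩ (Z1 \ {e})) \ L ⊆ meet \ {e} ∧
    (Cyclic (deleteElem M e) (meet \ {e}) →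
      ((Z0 \ {e}) ∩ (Z1 \ {e})) \ L = meet \ {e}) := by
  change meet = cyclicPart M (Z0 ∩ Z1) at hmeet
  rw [← sdiff_inter_distrib_right] at hL ⊢
  have hXE : (Z0 ∩ Z1) \ {e} ⊆ M.E \ {e} :=
    sdiff_subset_sdiff_left (inter_subset_left.trans h0.1.1)
  rw [hL, deleteElem_restrict_eq hXE, sdiff_coloops_restrict (hXE.trans sdiff_subset), hmeet]
  have hsub : cyclicPart M ((Z0 ∩ Z1) \ {e}) ⊆ cyclicPart M (Z0 ∩ Z1) \ {e} :=
    subset_sdiff_singleton (cyclicPart_mono sdiff_subset) fun he => (cyclicPart_subset he).2 rfl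
  refine ⟨hsub, fun hcyc => hsub.antisymm ?_⟩
  calc cyclicPart M (Z0 ∩ Z1) \ {e}
      ⊆ cyclicPart (deleteElem M e) (cyclicPart M (Z0 ∩ Z1) \ {e}) := hcyc.subset_cyclicPart
    _ ⊆ cyclicPart M (cyclicPart M (Z0 ∩ Z1) \ {e}) := cyclicPart_restrict_subset sdiff_subset
    _ ⊆ cyclicPart M ((Z0 ∩ Z1) \ {e}) :=
      cyclicPart_mono (sdiff_subset_sdiff_left cyclicPart_subset)

theorem statement_8 (M : Matroid α) (hfin : M.E.Finite) (e : α) (he : e ∈ M.E)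
    (Z0 Z1 : Set α) (h0 : CyclicFlat M Z0) (h1 : CyclicFlat M Z1)
    (meet : Set α) (hmeet : meet = ⋃₀ {C | Circuit M C ∧ C ⊆ Z0 ∩ Z1})
    (L : Set α)
    (hL : L = coloops (deleteElem M e ↾ ((Z0 \ {e}) ∩ (Z1 \ {e})))) :
    ((Z0 \ {e}) ∩ (Z1 \ {e})) \ L ⊆ meet \ {e} ∧
    (Cyclic (deleteElem M e) (meet \ {e}) →
      ((Z0 \ {e}) ∩ (Z1 \ {e})) \ L = meet \ {e}) :=
  statement_8_general M e Z0 Z1 h0 meet hmeet L hL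

end Paper
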